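/- arXiv:2101.01350 — 5 statements merged into one kernel-verified Lean document; each statement's English description precedes it below -/
import Mathlib

section
/- Let p ∈ (0,1], weights w_i ≥ 0, γ > 0, and y ∈ ℝ^n with ∑_i w_i |y_i|^p > γ. If x* is a global minimizer of (1/2)‖x − y‖₂² subject to ∑_i w_i |x_i|^p ≤ γ, then for every i, x*_i y_i ≥ 0. -/
/-! The constraint sees only the moduli `|x i|`, so flipping the sign of a coordinate with
`xstar i * y i < 0` keeps the point feasible while lowering the squared distance to `y`
by `4 |xstar i * y i|`, contradicting minimality. -/

open Finset

section SignFlip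

variable {ι : Type*} [DecidableEq ι]

lemma abs_update_neg_self (f : ι → ℝ) (i j : ι) :
    |Function.update f i (-f i) j| = |f j| := by
  by_cases h : j = i
  · subst h
    simp
  · simp [Function.update_of_ne h]

lemma neg_sub_sq_lt_sub_sq {a b : ℝ} (h : a * b < 0) : (-a - b) ^ 2 < (a - b) ^ 2 := by
  nlinarith

lemma sum_update_neg_sub_sq_lt [Fintype ι] (f g : ι → ℝ) {i : ι} (h : f i * g i < 0) :
    ∑ j, (Function.update f i (-f i) j - g j) ^ 2 < ∑ j, (f j - g j) ^ 2 := by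
  refine Finset.sum_lt_sum (fun j _ => ?_) ⟨i, mem_univ i, by simpa using neg_sub_sq_lt_sub_sq h⟩
  by_cases hj : j = i
  · subst hj
    simpa using (neg_sub_sq_lt_sub_sq h).le
  · simp [Function.update_of_ne hj]

end SignFlip

theorem stmt_0_general (n : ℕ) (p : ℝ)
    (w : Fin n → ℝ) (γ : ℝ)
    (y xstar : Fin n → ℝ)
    (hfeas : ∑ i, w i * |xstar i| ^ p ≤ γ)
    (hmin : ∀ x : Fin n → ℝ, ∑ i, w i * |x i| ^ p ≤ γ →
      (1/2) * ∑ i, (xstar i - y i) ^ 2 ≤ (1/2) * ∑ i, (x i - y i) ^ 2) :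
    ∀ i, 0 ≤ xstar i * y i := by
  intro i
  by_contra! hneg
  have hflip_feas : ∑ j, w j * |Function.update xstar i (-xstar i) j| ^ p ≤ γ := by
    simpa only [abs_update_neg_self] using hfeas
  have := hmin _ hflip_feas
  linarith [sum_update_neg_sub_sq_lt xstar y hneg]

theorem stmt_0 (n : ℕ) (p : ℝ) (hp0 : 0 < p) (hp1 : p ≤ 1)
    (w : Fin n → ℝ) (hw : ∀ i, 0 ≤ w i) (γ : ℝ) (hγ : 0 < γ)
    (y xstar : Fin n → ℝ)
    (hy : γ < ∑ i, w i * |y i| ^ p)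
    (hfeas : ∑ i, w i * |xstar i| ^ p ≤ γ)
    (hmin : ∀ x : Fin n → ℝ, ∑ i, w i * |x i| ^ p ≤ γ →
      (1/2) * ∑ i, (xstar i - y i) ^ 2 ≤ (1/2) * ∑ i, (x i - y i) ^ 2) :
    ∀ i, 0 ≤ xstar i * y i :=
  stmt_0_general n p w γ y xstar hfeas hmin
end

section
/- Let p ∈ (0,1], weights w_i ≥ 0, γ > 0, and y ∈ ℝ^n with ∑_i w_i |y_i|^p > γ. If x* is a global minimizer of (1/2)‖x − y‖₂² subject to ∑_i w_i |x_i|^p ≤ γ, then the vector |x*| (componentwise absolute value) is a global minimizer of (1/2)‖x − |y|‖₂² over x ∈ ℝ^n_{+} subject to ∑_i w_i x_i^p ≤ γ. -/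
/-!
Reflect each coordinate of a nonnegative competitor `x` onto the sign of `y`: the result has the
same weighted `ℓ_p` value as `x`, so it is feasible for the original problem, and its distance to
`y` equals the distance from `x` to `|y|`. On the other side, `|x*|` is no farther from `|y|` than
`x*` is from `y`, by the reverse triangle inequality in each coordinate.
-/

open Finset

theorem sq_abs_sub_abs_le_sq_sub (a b : ℝ) : (|a| - |b|) ^ 2 ≤ (a - b) ^ 2 :=
  sq_le_sq.mpr (abs_abs_sub_abs_le_abs_sub a b)

noncomputable def alignSign (b t : ℝ) : ℝ := if 0 ≤ b then t else -t

theorem abs_alignSign (b t : ℝ) : |alignSign b t| = |t| := by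
  unfold alignSign
  split_ifs <;> simp

theorem alignSign_sub_sq (b t : ℝ) : (alignSign b t - b) ^ 2 = (t - |b|) ^ 2 := by
  unfold alignSign
  split_ifs with hb
  · rw [abs_of_nonneg hb]
  · rw [abs_of_neg (not_le.mp hb)]
    ring

theorem stmt_2_general (n : ℕ) (p : ℝ)
    (w : Fin n → ℝ) (γ : ℝ)
    (y xstar : Fin n → ℝ)
    (hfeas : ∑ i, w i * |xstar i| ^ p ≤ γ)
    (hmin : ∀ x : Fin n → ℝ, ∑ i, w i * |x i| ^ p ≤ γ →
      (1/2) * ∑ i, (xstar i - y i) ^ 2 ≤ (1/2) * ∑ i, (x i - y i) ^ 2) :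
    ((∀ i, 0 ≤ |xstar i|) ∧ ∑ i, w i * |xstar i| ^ p ≤ γ) ∧
    (∀ x : Fin n → ℝ, (∀ i, 0 ≤ x i) → ∑ i, w i * (x i) ^ p ≤ γ →
      (1/2) * ∑ i, (|xstar i| - |y i|) ^ 2 ≤ (1/2) * ∑ i, (x i - |y i|) ^ 2) := by
  refine ⟨⟨fun i => abs_nonneg _, hfeas⟩, fun x hx hxfeas => ?_⟩
  set x' : Fin n → ℝ := fun i => alignSign (y i) (x i)
  have hx'feas : ∑ i, w i * |x' i| ^ p ≤ γ := by
    simpa only [x', abs_alignSign, abs_of_nonneg (hx _)] using hxfeas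
  calc (1/2 : ℝ) * ∑ i, (|xstar i| - |y i|) ^ 2
      ≤ (1/2) * ∑ i, (xstar i - y i) ^ 2 := by
        gcongr (1/2) * ?_
        exact sum_le_sum fun i _ => sq_abs_sub_abs_le_sq_sub _ _
    _ ≤ (1/2) * ∑ i, (x' i - y i) ^ 2 := hmin x' hx'feas
    _ = (1/2) * ∑ i, (x i - |y i|) ^ 2 := by simp only [x', alignSign_sub_sq]

theorem stmt_2 (n : ℕ) (p : ℝ) (hp0 : 0 < p) (hp1 : p ≤ 1)
    (w : Fin n → ℝ) (hw : ∀ i, 0 ≤ w i) (γ : ℝ) (hγ : 0 < γ)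
    (y xstar : Fin n → ℝ)
    (hy : γ < ∑ i, w i * |y i| ^ p)
    (hfeas : ∑ i, w i * |xstar i| ^ p ≤ γ)
    (hmin : ∀ x : Fin n → ℝ, ∑ i, w i * |x i| ^ p ≤ γ →
      (1/2) * ∑ i, (xstar i - y i) ^ 2 ≤ (1/2) * ∑ i, (x i - y i) ^ 2) :
    ((∀ i, 0 ≤ |xstar i|) ∧ ∑ i, w i * |xstar i| ^ p ≤ γ) ∧
    (∀ x : Fin n → ℝ, (∀ i, 0 ≤ x i) → ∑ i, w i * (x i) ^ p ≤ γ →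
      (1/2) * ∑ i, (|xstar i| - |y i|) ^ 2 ≤ (1/2) * ∑ i, (x i - |y i|) ^ 2) :=
  stmt_2_general n p w γ y xstar hfeas hmin
end

section
/- Let 0 < p < 1, γ > 0, ε ∈ ℝ^n_{++}, and x ∈ ℝ^n_{+} with ∑_i (x_i + ε_i)^p ≤ γ. Suppose x' ∈ ℝ^n_{+} satisfies the linearized constraint ∑_i (x_i + ε_i)^p + ∑_i p(x_i + ε_i)^{p−1}(x'_i − x_i) ≤ γ, and let ε' ∈ ℝ^n with 0 < ε'_i ≤ ε_i for all i. Then ∑_i (x'_i + ε'_i)^p ≤ γ. -/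
/-! Each term `(x'ᵢ + ε'ᵢ)^p` is at most `(x'ᵢ + εᵢ)^p` since `ε'ᵢ ≤ εᵢ`, and by concavity of
`t ↦ t^p` the latter lies below the tangent line at `xᵢ + εᵢ`. Summing the tangent lines gives
exactly the left-hand side of the linearized constraint. -/

open Finset

lemma Real.rpow_le_tangent_line {p a b : ℝ} (hp0 : 0 ≤ p) (hp1 : p ≤ 1) (ha : 0 < a)
    (hb : 0 ≤ b) : b ^ p ≤ a ^ p + p * a ^ (p - 1) * (b - a) := by
  have hs : -1 ≤ b / a - 1 := by linarith [div_nonneg hb ha.le]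
  have hba : b = a * (1 + (b / a - 1)) := by field_simp; ring
  calc b ^ p = a ^ p * (1 + (b / a - 1)) ^ p := by
        rw [← Real.mul_rpow ha.le (by linarith), ← hba]
    _ ≤ a ^ p * (1 + p * (b / a - 1)) := by
        gcongr
        exact rpow_one_add_le_one_add_mul_self hs hp0 hp1
    _ = a ^ p + p * a ^ (p - 1) * (b - a) := by
        rw [Real.rpow_sub ha, Real.rpow_one]
        field_simp

theorem stmt_7_general (n : ℕ) (p γ : ℝ) (hp0 : 0 < p) (hp1 : p < 1)
    (ε x : Fin n → ℝ) (hx : ∀ i, 0 ≤ x i)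
    (x' : Fin n → ℝ) (hx' : ∀ i, 0 ≤ x' i)
    (hlin : ∑ i, (x i + ε i) ^ p + ∑ i, p * (x i + ε i) ^ (p - 1) * (x' i - x i) ≤ γ)
    (ε' : Fin n → ℝ) (hε' : ∀ i, 0 < ε' i ∧ ε' i ≤ ε i) :
    ∑ i, (x' i + ε' i) ^ p ≤ γ := by
  have term_le : ∀ i, (x' i + ε' i) ^ p ≤
      (x i + ε i) ^ p + p * (x i + ε i) ^ (p - 1) * (x' i - x i) := fun i => by
    obtain ⟨hε'_pos, hε'_le⟩ := hε' i
    calc (x' i + ε' i) ^ p ≤ (x' i + ε i) ^ p := by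
          gcongr
          linarith [hx' i]
      _ ≤ (x i + ε i) ^ p + p * (x i + ε i) ^ (p - 1) * ((x' i + ε i) - (x i + ε i)) :=
          Real.rpow_le_tangent_line hp0.le hp1.le (by linarith [hx i])
            (by linarith [hx' i])
      _ = (x i + ε i) ^ p + p * (x i + ε i) ^ (p - 1) * (x' i - x i) := by ring
  calc ∑ i, (x' i + ε' i) ^ p
      ≤ ∑ i, ((x i + ε i) ^ p + p * (x i + ε i) ^ (p - 1) * (x' i - x i)) :=
        sum_le_sum fun i _ => term_le i
    _ = ∑ i, (x i + ε i) ^ p + ∑ i, p * (x i + ε i) ^ (p - 1) * (x' i - x i) :=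
        sum_add_distrib
    _ ≤ γ := hlin

theorem stmt_7 (n : ℕ) (p γ : ℝ) (hp0 : 0 < p) (hp1 : p < 1) (hγ : 0 < γ)
    (ε x : Fin n → ℝ) (hε : ∀ i, 0 < ε i) (hx : ∀ i, 0 ≤ x i)
    (hfeas : ∑ i, (x i + ε i) ^ p ≤ γ)
    (x' : Fin n → ℝ) (hx' : ∀ i, 0 ≤ x' i)
    (hlin : ∑ i, (x i + ε i) ^ p + ∑ i, p * (x i + ε i) ^ (p - 1) * (x' i - x i) ≤ γ)
    (ε' : Fin n → ℝ) (hε' : ∀ i, 0 < ε' i ∧ ε' i ≤ ε i) :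
    ∑ i, (x' i + ε' i) ^ p ≤ γ :=
  stmt_7_general n p γ hp0 hp1 ε x hx x' hx' hlin ε' hε'
end

section
/- Let 0 < p < 1, ε ∈ ℝ^n_{++}, λ ≥ 0, and let x ∈ ℝ^n satisfy 0 ≤ x_i ≤ ȳ_i for all i where ȳ ∈ ℝ^n_{+}. Define α(x,λ) = ∑_i |(ȳ_i − x_i)x_i − λ p x_i^p| and α_ε(x,λ) = ∑_i |(ȳ_i − x_i)x_i − λ p (x_i + ε_i)^{p−1} x_i|. Then |α(x,λ) − α_ε(x,λ)| ≤ λ p ∑_i ε_i^p. -/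
/-! Per coordinate the two residuals differ only in the term `λ p x^p` versus
`λ p (x + ε)^(p-1) x`, so by the reverse triangle inequality it suffices to show
`0 ≤ x^p - (x + ε)^(p-1) x ≤ ε^p`. Both bounds come from `t ↦ t^(p-1)` being
antitone for `p ≤ 1`: compare `(x + ε)^(p-1)` with `x^(p-1)` for the lower bound,
and with `ε^(p-1)` after writing `(x + ε)^p = (x + ε)^(p-1) (x + ε) ≥ x^p` for the
upper one. -/

open Finset

namespace Real

variable {p x e : ℝ}

lemma rpow_sub_one_mul_self (hx : x ≠ 0) (p : ℝ) : x ^ (p - 1) * x = x ^ p := by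
  rw [← rpow_add_one hx, sub_add_cancel]

lemma add_rpow_sub_one_mul_le_rpow (hp1 : p ≤ 1) (hx : 0 ≤ x) (he : 0 ≤ e) :
    (x + e) ^ (p - 1) * x ≤ x ^ p := by
  rcases hx.eq_or_lt with rfl | hx
  · simpa using rpow_nonneg le_rfl p
  calc (x + e) ^ (p - 1) * x ≤ x ^ (p - 1) * x := by
        have : (x + e) ^ (p - 1) ≤ x ^ (p - 1) :=
          rpow_le_rpow_of_nonpos hx (by linarith) (by linarith)
        gcongr
    _ = x ^ p := rpow_sub_one_mul_self hx.ne' p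

lemma rpow_le_add_rpow_sub_one_mul_add_rpow (hp0 : 0 ≤ p) (hp1 : p ≤ 1) (hx : 0 ≤ x)
    (he : 0 < e) : x ^ p ≤ (x + e) ^ (p - 1) * x + e ^ p := by
  have hxe : 0 < x + e := by linarith
  calc x ^ p ≤ (x + e) ^ p := rpow_le_rpow hx (by linarith) hp0
    _ = (x + e) ^ (p - 1) * x + (x + e) ^ (p - 1) * e := by
        rw [← mul_add, rpow_sub_one_mul_self hxe.ne']
    _ ≤ (x + e) ^ (p - 1) * x + e ^ (p - 1) * e := by
        have : (x + e) ^ (p - 1) ≤ e ^ (p - 1) :=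
          rpow_le_rpow_of_nonpos he (by linarith) (by linarith)
        gcongr
    _ = (x + e) ^ (p - 1) * x + e ^ p := by rw [rpow_sub_one_mul_self he.ne']

lemma abs_rpow_sub_add_rpow_sub_one_mul_le (hp0 : 0 ≤ p) (hp1 : p ≤ 1) (hx : 0 ≤ x)
    (he : 0 < e) : |x ^ p - (x + e) ^ (p - 1) * x| ≤ e ^ p := by
  rw [abs_of_nonneg (sub_nonneg.2 (add_rpow_sub_one_mul_le_rpow hp1 hx he.le))]
  linarith [rpow_le_add_rpow_sub_one_mul_add_rpow hp0 hp1 hx he]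

end Real

lemma abs_abs_sub_mul_sub_abs_sub_mul_le {a c u v : ℝ} (hc : 0 ≤ c) :
    |(|a - c * u| - |a - c * v|)| ≤ c * |u - v| := by
  calc |(|a - c * u| - |a - c * v|)| ≤ |(a - c * u) - (a - c * v)| :=
        abs_abs_sub_abs_le_abs_sub _ _
    _ = c * |u - v| := by
        rw [sub_sub_sub_cancel_left, ← mul_sub, abs_mul, abs_of_nonneg hc, abs_sub_comm]

theorem stmt_9_general (n : ℕ) (p : ℝ) (hp0 : 0 < p) (hp1 : p < 1)
    (ε : Fin n → ℝ) (hε : ∀ i, 0 < ε i)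
    (lam : ℝ) (hlam : 0 ≤ lam)
    (ybar x : Fin n → ℝ)
    (hx : ∀ i, 0 ≤ x i ∧ x i ≤ ybar i) :
    |(∑ i, |(ybar i - x i) * x i - lam * p * (x i) ^ p|) -
     (∑ i, |(ybar i - x i) * x i - lam * p * (x i + ε i) ^ (p - 1) * x i|)| ≤
      lam * p * ∑ i, (ε i) ^ p := by
  have hc : 0 ≤ lam * p := by positivity
  rw [← sum_sub_distrib, mul_sum]
  refine (abs_sum_le_sum_abs _ _).trans (sum_le_sum fun i _ => ?_)
  rw [mul_assoc (lam * p)]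
  calc _ ≤ lam * p * |x i ^ p - (x i + ε i) ^ (p - 1) * x i| :=
        abs_abs_sub_mul_sub_abs_sub_mul_le hc
    _ ≤ lam * p * ε i ^ p := by
        gcongr
        exact Real.abs_rpow_sub_add_rpow_sub_one_mul_le hp0.le hp1.le (hx i).1 (hε i)

theorem stmt_9 (n : ℕ) (p : ℝ) (hp0 : 0 < p) (hp1 : p < 1)
    (ε : Fin n → ℝ) (hε : ∀ i, 0 < ε i)
    (lam : ℝ) (hlam : 0 ≤ lam)
    (ybar x : Fin n → ℝ) (hybar : ∀ i, 0 ≤ ybar i)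
    (hx : ∀ i, 0 ≤ x i ∧ x i ≤ ybar i) :
    |(∑ i, |(ybar i - x i) * x i - lam * p * (x i) ^ p|) -
     (∑ i, |(ybar i - x i) * x i - lam * p * (x i + ε i) ^ (p - 1) * x i|)| ≤
      lam * p * ∑ i, (ε i) ^ p :=
  stmt_9_general n p hp0 hp1 ε hε lam hlam ybar x hx
end

section
/- Let 0 < p < 1, λ ≥ 0, ε ∈ ℝ^n_{++}, ȳ ∈ ℝ^n_{+}, and suppose x, x⁻ ∈ ℝ^n_{+} satisfy 0 ≤ x_i ≤ ȳ_i for all i and the subproblem optimality condition ȳ_i − x_i = λ p (x⁻_i + ε_i)^{p−1} whenever x_i > 0, with ȳ_i − x_i = 0 implied for x_i = 0 in the definition below. Define α_ε(x,λ) = ∑_i |(ȳ_i − x_i)x_i − λ p (x_i + ε_i)^{p−1} x_i|. Then α_ε(x,λ) ≤ λ p (1−p) ‖ȳ‖₂ ‖ε^{p−2}‖₂ ‖x⁻ − x‖₂, where ε^{p−2} denotes the vector with entries ε_i^{p−2}. -/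
/-!
On the support of `x` the optimality condition turns the `i`-th residual into
`λ p xᵢ ((x⁻ᵢ + εᵢ)^{p-1} - (xᵢ + εᵢ)^{p-1})`, and off the support the residual vanishes.
Since `t ↦ t^{p-1}` has derivative of modulus at most `(1 - p) εᵢ^{p-2}` on `[εᵢ, ∞)`, the mean
value theorem and `xᵢ ≤ ȳᵢ` bound the residual by `λ p (1 - p) ȳᵢ εᵢ^{p-2} |x⁻ᵢ - xᵢ|`; summing
and applying Cauchy–Schwarz to three factors gives the claim.
-/

open Finset

lemma abs_rpow_sub_rpow_le_of_le {r c a b : ℝ} (hr : r ≤ 1) (hc : 0 < c) (ha : c ≤ a)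
    (hb : c ≤ b) : |a ^ r - b ^ r| ≤ |r| * c ^ (r - 1) * |a - b| := by
  have hderiv : ∀ t ∈ Set.Ici c,
      HasDerivWithinAt (fun s : ℝ => s ^ r) (r * t ^ (r - 1)) (Set.Ici c) t := fun t ht =>
    (Real.hasDerivAt_rpow_const (Or.inl (hc.trans_le ht).ne')).hasDerivWithinAt
  have hbound : ∀ t ∈ Set.Ici c, ‖r * t ^ (r - 1)‖ ≤ |r| * c ^ (r - 1) := by
    intro t ht
    have ht0 : 0 < t := hc.trans_le ht
    rw [Real.norm_eq_abs, abs_mul, abs_of_nonneg (Real.rpow_nonneg ht0.le _)]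
    exact mul_le_mul_of_nonneg_left (Real.rpow_le_rpow_of_nonpos hc ht (by linarith))
      (abs_nonneg r)
  simpa only [Real.norm_eq_abs] using
    (convex_Ici c).norm_image_sub_le_of_norm_hasDerivWithin_le hderiv hbound hb ha

lemma sum_mul_sq_le_sum_sq_mul_sum_sq {ι : Type*} (s : Finset ι) (f g : ι → ℝ) :
    ∑ i ∈ s, (f i * g i) ^ 2 ≤ (∑ i ∈ s, f i ^ 2) * ∑ i ∈ s, g i ^ 2 := by
  rw [sum_mul_sum]
  refine sum_le_sum fun i hi => ?_
  rw [mul_pow]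
  exact single_le_sum (f := fun j => f i ^ 2 * g j ^ 2) (fun j _ => by positivity) hi

lemma Real.sum_mul_mul_le_sqrt_mul_sqrt_mul_sqrt {ι : Type*} (s : Finset ι) (f g h : ι → ℝ) :
    ∑ i ∈ s, f i * (g i * h i) ≤
      √(∑ i ∈ s, f i ^ 2) * √(∑ i ∈ s, g i ^ 2) * √(∑ i ∈ s, h i ^ 2) := by
  calc ∑ i ∈ s, f i * (g i * h i)
      ≤ √(∑ i ∈ s, f i ^ 2) * √(∑ i ∈ s, (g i * h i) ^ 2) :=
        Real.sum_mul_le_sqrt_mul_sqrt s f _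
    _ ≤ √(∑ i ∈ s, f i ^ 2) * √((∑ i ∈ s, g i ^ 2) * ∑ i ∈ s, h i ^ 2) := by
        gcongr
        exact sum_mul_sq_le_sum_sq_mul_sum_sq s g h
    _ = √(∑ i ∈ s, f i ^ 2) * √(∑ i ∈ s, g i ^ 2) * √(∑ i ∈ s, h i ^ 2) := by
        rw [Real.sqrt_mul (sum_nonneg fun i _ => sq_nonneg (g i)), mul_assoc]

lemma abs_complementarity_residual_le {p lam e y x xm : ℝ} (hp0 : 0 ≤ p) (hp1 : p ≤ 1)
    (hlam : 0 ≤ lam) (he : 0 < e) (hx0 : 0 ≤ x) (hxy : x ≤ y) (hxm : 0 ≤ xm)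
    (hopt : 0 < x → y - x = lam * p * (xm + e) ^ (p - 1)) :
    |(y - x) * x - lam * p * (x + e) ^ (p - 1) * x| ≤
      lam * p * (1 - p) * (y * (e ^ (p - 2) * |xm - x|)) := by
  have h1p : 0 ≤ 1 - p := by linarith
  have hy : 0 ≤ y := hx0.trans hxy
  have hepow : 0 ≤ e ^ (p - 2) := Real.rpow_nonneg he.le _
  rcases hx0.eq_or_lt with rfl | hx_pos
  · simp only [mul_zero, sub_zero, abs_zero]
    positivity
  have hresidual : (y - x) * x - lam * p * (x + e) ^ (p - 1) * x =
      lam * p * x * ((xm + e) ^ (p - 1) - (x + e) ^ (p - 1)) := by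
    rw [hopt hx_pos]; ring
  have hmvt : |(xm + e) ^ (p - 1) - (x + e) ^ (p - 1)| ≤ (1 - p) * e ^ (p - 2) * |xm - x| := by
    have h := abs_rpow_sub_rpow_le_of_le (r := p - 1) (by linarith) he
      (by linarith : e ≤ xm + e) (by linarith : e ≤ x + e)
    rwa [abs_of_nonpos (a := p - 1) (by linarith), neg_sub, show p - 1 - 1 = p - 2 by ring,
      add_sub_add_right_eq_sub] at h
  rw [hresidual, abs_mul, abs_of_nonneg (by positivity)]
  calc lam * p * x * |(xm + e) ^ (p - 1) - (x + e) ^ (p - 1)|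
      ≤ lam * p * y * ((1 - p) * e ^ (p - 2) * |xm - x|) := by
        gcongr
    _ = lam * p * (1 - p) * (y * (e ^ (p - 2) * |xm - x|)) := by ring

theorem stmt_15_general (n : ℕ) (p : ℝ) (hp0 : 0 < p) (hp1 : p < 1)
    (lam : ℝ) (hlam : 0 ≤ lam)
    (ε ybar x xm : Fin n → ℝ)
    (hε : ∀ i, 0 < ε i)
    (hx : ∀ i, 0 ≤ x i ∧ x i ≤ ybar i) (hxm : ∀ i, 0 ≤ xm i)
    (hopt : ∀ i, 0 < x i → ybar i - x i = lam * p * (xm i + ε i) ^ (p - 1)) :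
    ∑ i, |(ybar i - x i) * x i - lam * p * (x i + ε i) ^ (p - 1) * x i| ≤
      lam * p * (1 - p) * Real.sqrt (∑ i, (ybar i) ^ 2) *
        Real.sqrt (∑ i, ((ε i) ^ (p - 2)) ^ 2) *
        Real.sqrt (∑ i, (xm i - x i) ^ 2) := by
  have hcoef : 0 ≤ lam * p * (1 - p) := mul_nonneg (mul_nonneg hlam hp0.le) (by linarith)
  calc ∑ i, |(ybar i - x i) * x i - lam * p * (x i + ε i) ^ (p - 1) * x i|
      ≤ ∑ i, lam * p * (1 - p) * (ybar i * (ε i ^ (p - 2) * |xm i - x i|)) :=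
        sum_le_sum fun i _ => abs_complementarity_residual_le hp0.le hp1.le hlam (hε i)
          (hx i).1 (hx i).2 (hxm i) (hopt i)
    _ = lam * p * (1 - p) * ∑ i, ybar i * (ε i ^ (p - 2) * |xm i - x i|) := by
        rw [mul_sum]
    _ ≤ lam * p * (1 - p) * (√(∑ i, ybar i ^ 2) * √(∑ i, (ε i ^ (p - 2)) ^ 2) *
          √(∑ i, |xm i - x i| ^ 2)) := by
        gcongr
        exact Real.sum_mul_mul_le_sqrt_mul_sqrt_mul_sqrt _ _ _ _
    _ = _ := by simp only [sq_abs, mul_assoc]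

theorem stmt_15 (n : ℕ) (p : ℝ) (hp0 : 0 < p) (hp1 : p < 1)
    (lam : ℝ) (hlam : 0 ≤ lam)
    (ε ybar x xm : Fin n → ℝ)
    (hε : ∀ i, 0 < ε i) (hybar : ∀ i, 0 ≤ ybar i)
    (hx : ∀ i, 0 ≤ x i ∧ x i ≤ ybar i) (hxm : ∀ i, 0 ≤ xm i)
    (hopt : ∀ i, 0 < x i → ybar i - x i = lam * p * (xm i + ε i) ^ (p - 1)) :
    ∑ i, |(ybar i - x i) * x i - lam * p * (x i + ε i) ^ (p - 1) * x i| ≤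
      lam * p * (1 - p) * Real.sqrt (∑ i, (ybar i) ^ 2) *
        Real.sqrt (∑ i, ((ε i) ^ (p - 2)) ^ 2) *
        Real.sqrt (∑ i, (xm i - x i) ^ 2) :=
  stmt_15_general n p hp0 hp1 lam hlam ε ybar x xm hε hx hxm hopt
end
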